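/- Let U ⊆ R^d be an open set whose boundary has Lebesgue measure zero, and let p, q ∈ (1, ∞) with 1/p + 1/q = 1. Let f ∈ L^p(U, C), g ∈ L^q(U, C) (both extended by zero outside U), and let w: U × U → C be bounded and continuous on U × U (extended by zero outside U × U). Then the weighted cross-correlation f ⋆_w g is a continuous function on R^d. -/

import Mathlib

open MeasureTheory Complex

/-- Weighted cross-correlation `(f ⋆_w g)(x) = ∫ f*(y) g(x+y) w(x+y, y) dy`. -/
noncomputable def wcc {d : ℕ} (f g : EuclideanSpace ℝ (Fin d) → ℂ)
    (w : EuclideanSpace ℝ (Fin d) → EuclideanSpace ℝ (Fin d) → ℂ)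
    (x : EuclideanSpace ℝ (Fin d)) : ℂ :=
  ∫ y, (starRingEnd ℂ) (f y) * g (x + y) * w (x + y) y

/-!
For continuous compactly supported `g`, dominated convergence gives continuity: near `x₀` the
integrand is bounded by `C · sup ‖g‖ · ‖f‖` on a compact set, and for a.e. `y` it is continuous in
`x`, since the weight can only jump where `(x₀ + y, y)` meets the frontier of `U ×ˢ U`, which
happens for `y` in a null set. Hölder's inequality bounds `‖f ⋆_w g - f ⋆_w h‖` uniformly by
`C ‖f‖_p ‖g - h‖_q`, so by density of `C_c` in `L^q` the correlation `f ⋆_w g` is a uniform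
limit of continuous functions.
-/

open Filter Topology Set
open scoped ENNReal Pointwise

section ZeroOffOpen

variable {X F : Type*} [TopologicalSpace X] [TopologicalSpace F] [Zero F] {S : Set X}
  {W : X → F}

lemma ContinuousOn.continuousAt_of_eq_zero_off (hS : IsOpen S) (hW : ContinuousOn W S)
    (h0 : ∀ z ∉ S, W z = 0) {z : X} (hz : z ∉ frontier S) : ContinuousAt W z := by
  by_cases hzS : z ∈ S
  · exact hW.continuousAt (hS.mem_nhds hzS)
  · have hz_ext : z ∈ (closure S)ᶜ := fun h => hz ⟨h, by rwa [hS.interior_eq]⟩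
    have hW0 : (fun _ => 0) =ᶠ[𝓝 z] W := by
      filter_upwards [isClosed_closure.isOpen_compl.mem_nhds hz_ext] with x hx
      exact (h0 x fun h => hx (subset_closure h)).symm
    exact continuousAt_const.congr hW0

lemma ContinuousOn.measurable_of_eq_zero_off [MeasurableSpace X] [OpensMeasurableSpace X]
    [MeasurableSpace F] [BorelSpace F] (hS : IsOpen S) (hW : ContinuousOn W S)
    (h0 : ∀ z ∉ S, W z = 0) : Measurable W := by
  classical
  have hW_eq : S.piecewise W 0 = W := by
    ext z
    by_cases hz : z ∈ S
    · exact piecewise_eq_of_mem _ _ _ hz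
    · rw [piecewise_eq_of_notMem _ _ _ hz, h0 z hz]; rfl
  exact hW_eq ▸ hW.measurable_piecewise continuousOn_const hS.measurableSet

end ZeroOffOpen

section Holder

variable {α : Type*} [MeasurableSpace α] {μ : Measure α} {p q : ℝ≥0∞} [p.HolderConjugate q]
  {f g W : α → ℂ} {C : ℝ}

lemma enorm_integral_mul_mul_le (hf : AEStronglyMeasurable f μ)
    (hg : AEStronglyMeasurable g μ) (hC : ∀ y, ‖W y‖ ≤ C) :
    ‖∫ y, f y * g y * W y ∂μ‖ₑ ≤ ENNReal.ofReal C * eLpNorm f p μ * eLpNorm g q μ := by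
  calc ‖∫ y, f y * g y * W y ∂μ‖ₑ ≤ ∫⁻ y, ‖f y * g y * W y‖ₑ ∂μ :=
        enorm_integral_le_lintegral_enorm _
    _ ≤ ∫⁻ y, ENNReal.ofReal C * ‖(f • g) y‖ₑ ∂μ := by
        refine lintegral_mono fun y => ?_
        rw [enorm_mul, mul_comm, Pi.smul_apply', smul_eq_mul, ← ofReal_norm (W y)]
        gcongr
        exact hC y
    _ = ENNReal.ofReal C * eLpNorm (f • g) 1 μ := by
        rw [lintegral_const_mul' _ _ ENNReal.ofReal_ne_top, eLpNorm_one_eq_lintegral_enorm]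
    _ ≤ ENNReal.ofReal C * (eLpNorm f p μ * eLpNorm g q μ) := by
        gcongr
        exact eLpNorm_smul_le_mul_eLpNorm hg hf
    _ = ENNReal.ofReal C * eLpNorm f p μ * eLpNorm g q μ := (mul_assoc _ _ _).symm

lemma integrable_mul_mul_of_norm_le (hf : MemLp f p μ) (hg : MemLp g q μ)
    (hW : AEStronglyMeasurable W μ) (hC : ∀ y, ‖W y‖ ≤ C) :
    Integrable (fun y => f y * g y * W y) μ :=
  (hf.integrable_mul hg).mul_bdd hW (.of_forall hC)

end Holder

section ShiftContinuity

variable {G F : Type*} [TopologicalSpace G] [AddGroup G] [ContinuousAdd G]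
  [MeasurableSpace G] [OpensMeasurableSpace G] [MeasurableAdd G] {μ : Measure G}
  [μ.IsAddLeftInvariant] [TopologicalSpace F] [Zero F] {U : Set G} {w : G → G → F}

lemma ae_continuousAt_shift_of_eq_zero_off (hU : IsOpen U) (hUfr : μ (frontier U) = 0)
    (hw : ContinuousOn (Function.uncurry w) (U ×ˢ U))
    (hw0 : ∀ z ∉ U ×ˢ U, Function.uncurry w z = 0) (x₀ : G) :
    ∀ᵐ y ∂μ, ContinuousAt (fun x => w (x + y) y) x₀ := by
  have hshift : μ ((x₀ + ·) ⁻¹' frontier U) = 0 := by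
    rwa [(measurePreserving_add_left μ x₀).measure_preimage
      isClosed_frontier.measurableSet.nullMeasurableSet]
  filter_upwards [measure_eq_zero_iff_ae_notMem.mp (measure_union_null hUfr hshift)] with y hy
  simp only [mem_union, mem_preimage, not_or] at hy
  have hfr : (x₀ + y, y) ∉ frontier (U ×ˢ U) := by
    simp only [frontier_prod_eq, mem_union, mem_prod, not_or, not_and_or]
    exact ⟨Or.inr hy.1, Or.inl hy.2⟩
  exact ContinuousAt.comp (f := fun x => (x + y, y))
    (hw.continuousAt_of_eq_zero_off (hU.prod hU) hw0 hfr)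
    ((continuous_add_const y).prodMk continuous_const).continuousAt

end ShiftContinuity

section Correlation

variable {d : ℕ} {f g h : EuclideanSpace ℝ (Fin d) → ℂ}
  {w : EuclideanSpace ℝ (Fin d) → EuclideanSpace ℝ (Fin d) → ℂ} {C : ℝ}

lemma aestronglyMeasurable_weight_shift (hw : Measurable (Function.uncurry w))
    (x : EuclideanSpace ℝ (Fin d)) : AEStronglyMeasurable (fun y => w (x + y) y) volume :=
  (hw.comp ((measurable_const_add x).prodMk measurable_id)).aestronglyMeasurable

lemma continuous_wcc_of_hasCompactSupport (hf : LocallyIntegrable f volume)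
    (hg : Continuous g) (hg_supp : HasCompactSupport g) (hw : Measurable (Function.uncurry w))
    (hC : ∀ x y, ‖w x y‖ ≤ C)
    (hw_cont : ∀ x₀, ∀ᵐ y, ContinuousAt (fun x => w (x + y) y) x₀) :
    Continuous (wcc f g w) := by
  refine continuous_iff_continuousAt.2 fun x₀ => ?_
  obtain ⟨M, hM⟩ := hg_supp.exists_bound_of_continuous hg
  have hC0 : 0 ≤ C := (norm_nonneg _).trans (hC 0 0)
  have hM0 : 0 ≤ M := (norm_nonneg _).trans (hM 0)
  set K := tsupport g + Metric.closedBall (-x₀) 1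
  have hK : IsCompact K := IsCompact.add hg_supp (isCompact_closedBall (-x₀) 1)
  refine continuousAt_of_dominated (bound := K.indicator fun y => C * M * ‖f y‖) ?_ ?_ ?_ ?_
  · refine .of_forall fun x => ?_
    exact (hf.aestronglyMeasurable.star.mul
      (hg.comp (continuous_const_add x)).aestronglyMeasurable).mul
      (aestronglyMeasurable_weight_shift hw x)
  · filter_upwards [Metric.closedBall_mem_nhds x₀ one_pos] with x hx
    refine .of_forall fun y => ?_
    by_cases hgy : g (x + y) = 0
    · simp only [hgy, mul_zero, zero_mul, norm_zero]
      exact indicator_nonneg (fun y _ => by positivity) y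
    have hyK : y ∈ K := by
      have hx' : -x ∈ Metric.closedBall (-x₀) 1 := by rwa [Metric.mem_closedBall, dist_neg_neg]
      simpa using add_mem_add (subset_tsupport g (Function.mem_support.2 hgy)) hx'
    rw [indicator_of_mem hyK, norm_mul, norm_mul, RCLike.norm_conj]
    calc ‖f y‖ * ‖g (x + y)‖ * ‖w (x + y) y‖ ≤ ‖f y‖ * M * C := by
          gcongr
          · exact hM _
          · exact hC _ _
      _ = C * M * ‖f y‖ := by ring
  · exact (integrable_indicator_iff hK.measurableSet).2
      ((hf.integrableOn_isCompact hK).norm.const_mul _)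
  · filter_upwards [hw_cont x₀] with y hy
    exact (continuousAt_const.mul (hg.comp (continuous_add_const y)).continuousAt).mul hy

variable {p q : ℝ≥0∞} [p.HolderConjugate q]

lemma integrable_wcc_integrand (hf : MemLp f p volume) (hg : MemLp g q volume)
    (hw : Measurable (Function.uncurry w)) (hC : ∀ x y, ‖w x y‖ ≤ C)
    (x : EuclideanSpace ℝ (Fin d)) :
    Integrable (fun y => starRingEnd ℂ (f y) * g (x + y) * w (x + y) y) volume :=
  integrable_mul_mul_of_norm_le hf.star
    (hg.comp_measurePreserving (measurePreserving_add_left volume x))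
    (aestronglyMeasurable_weight_shift hw x) (fun _ => hC _ _)

lemma wcc_sub_right (hf : MemLp f p volume) (hg : MemLp g q volume) (hh : MemLp h q volume)
    (hw : Measurable (Function.uncurry w)) (hC : ∀ x y, ‖w x y‖ ≤ C)
    (x : EuclideanSpace ℝ (Fin d)) : wcc f g w x - wcc f h w x = wcc f (g - h) w x := by
  rw [wcc, wcc, ← integral_sub (integrable_wcc_integrand hf hg hw hC x)
    (integrable_wcc_integrand hf hh hw hC x)]
  congr 1 with y
  simp only [Pi.sub_apply]
  ring

lemma enorm_wcc_le (hf : AEStronglyMeasurable f volume) (hg : AEStronglyMeasurable g volume)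
    (hC : ∀ x y, ‖w x y‖ ≤ C) (x : EuclideanSpace ℝ (Fin d)) :
    ‖wcc f g w x‖ₑ ≤ ENNReal.ofReal C * eLpNorm f p volume * eLpNorm g q volume := by
  have hshift := measurePreserving_add_left (volume : Measure (EuclideanSpace ℝ (Fin d))) x
  have := enorm_integral_mul_mul_le (p := p) (q := q) hf.star
    (hg.comp_measurePreserving hshift) (fun y => hC (x + y) y)
  rwa [eLpNorm_star, eLpNorm_comp_measurePreserving hg hshift] at this

lemma edist_wcc_le (hf : MemLp f p volume) (hg : MemLp g q volume) (hh : MemLp h q volume)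
    (hw : Measurable (Function.uncurry w)) (hC : ∀ x y, ‖w x y‖ ≤ C)
    (x : EuclideanSpace ℝ (Fin d)) :
    edist (wcc f g w x) (wcc f h w x)
      ≤ ENNReal.ofReal C * eLpNorm f p volume * eLpNorm (g - h) q volume := by
  rw [edist_eq_enorm_sub, wcc_sub_right hf hg hh hw hC]
  exact enorm_wcc_le hf.1 (hg.1.sub hh.1) hC x

theorem continuous_wcc (hq : q ≠ ∞) (hf : MemLp f p volume) (hg : MemLp g q volume)
    (hw : Measurable (Function.uncurry w)) (hC : ∀ x y, ‖w x y‖ ≤ C)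
    (hw_cont : ∀ x₀, ∀ᵐ y, ContinuousAt (fun x => w (x + y) y) x₀) :
    Continuous (wcc f g w) := by
  refine continuous_of_uniform_approx_of_continuous fun u hu => ?_
  obtain ⟨ε, hε, hεu⟩ := mem_uniformity_edist.1 hu
  obtain ⟨δ, hδ, hδε⟩ := ENNReal.exists_pos_mul_lt
    (a := ENNReal.ofReal C * eLpNorm f p volume) (by finiteness [hf.2]) hε.ne'
  obtain ⟨h, hh_supp, hgh, hh_cont, hh⟩ := hg.exists_hasCompactSupport_eLpNorm_sub_le hq hδ.ne'
  refine ⟨wcc f h w, continuous_wcc_of_hasCompactSupport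
    (hf.locallyIntegrable (ENNReal.HolderConjugate.one_le p q)) hh_cont hh_supp hw hC hw_cont,
    fun x => hεu ?_⟩
  calc edist (wcc f g w x) (wcc f h w x)
      ≤ ENNReal.ofReal C * eLpNorm f p volume * eLpNorm (g - h) q volume :=
        edist_wcc_le hf hg hh hw hC x
    _ ≤ ENNReal.ofReal C * eLpNorm f p volume * δ := by gcongr
    _ < ε := by rwa [mul_comm] at hδε

end Correlation

theorem stmt5_general {d : ℕ} (U : Set (EuclideanSpace ℝ (Fin d)))
    (hUo : IsOpen U) (hUfr : volume (frontier U) = 0)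
    (p q : ℝ) (hp : 1 < p) (hpq : 1 / p + 1 / q = 1)
    (f g : EuclideanSpace ℝ (Fin d) → ℂ)
    (hf : MemLp f (ENNReal.ofReal p) (volume : Measure (EuclideanSpace ℝ (Fin d))))
    (hg : MemLp g (ENNReal.ofReal q) (volume : Measure (EuclideanSpace ℝ (Fin d))))
    (w : EuclideanSpace ℝ (Fin d) → EuclideanSpace ℝ (Fin d) → ℂ)
    (hwc : ContinuousOn (fun z : EuclideanSpace ℝ (Fin d) × EuclideanSpace ℝ (Fin d) => w z.1 z.2)
      (U ×ˢ U))
    (C : ℝ) (hC : ∀ x y, ‖w x y‖ ≤ C)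
    (hwU : ∀ x y, x ∉ U ∨ y ∉ U → w x y = 0) :
    Continuous (wcc f g w) := by
  have : (ENNReal.ofReal p).HolderConjugate (ENNReal.ofReal q) :=
    (Real.holderConjugate_iff.2 ⟨hp, by simpa only [one_div] using hpq⟩).ennrealOfReal
  have hw0 : ∀ z ∉ U ×ˢ U, Function.uncurry w z = 0 := fun z hz =>
    hwU z.1 z.2 (by rwa [mem_prod, not_and_or] at hz)
  exact continuous_wcc ENNReal.ofReal_ne_top hf hg
    (hwc.measurable_of_eq_zero_off (hUo.prod hUo) hw0) hC
    (ae_continuousAt_shift_of_eq_zero_off hUo hUfr hwc hw0)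

theorem stmt5 {d : ℕ} (U : Set (EuclideanSpace ℝ (Fin d)))
    (hUo : IsOpen U) (hUfr : volume (frontier U) = 0)
    (p q : ℝ) (hp : 1 < p) (hq : 1 < q) (hpq : 1 / p + 1 / q = 1)
    (f g : EuclideanSpace ℝ (Fin d) → ℂ)
    (hf : MemLp f (ENNReal.ofReal p) (volume : Measure (EuclideanSpace ℝ (Fin d))))
    (hg : MemLp g (ENNReal.ofReal q) (volume : Measure (EuclideanSpace ℝ (Fin d))))
    (hfU : ∀ x, x ∉ U → f x = 0) (hgU : ∀ x, x ∉ U → g x = 0)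
    (w : EuclideanSpace ℝ (Fin d) → EuclideanSpace ℝ (Fin d) → ℂ)
    (hwc : ContinuousOn (fun z : EuclideanSpace ℝ (Fin d) × EuclideanSpace ℝ (Fin d) => w z.1 z.2)
      (U ×ˢ U))
    (C : ℝ) (hC : ∀ x y, ‖w x y‖ ≤ C)
    (hwU : ∀ x y, x ∉ U ∨ y ∉ U → w x y = 0) :
    Continuous (wcc f g w) :=
  stmt5_general U hUo hUfr p q hp hpq f g hf hg w hwc C hC hwU
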